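/- arXiv:1709.09787 — 4 statements merged into one kernel-verified Lean document; each statement's English description precedes it below -/
import Mathlib

section
/- There exists a unitary U₁₂ acting on the first two qutrits such that for each i ∈ {0,1,2}, (U₁₂⊗I)|i_L⟩ = |i⟩ ⊗ |χ⟩₂₃, where |χ⟩ = (|00⟩+|11⟩+|22⟩)/√3; i.e., the three-qutrit code can recover the logical qutrit from the first two physical qutrits. -/
/-!
The code state `|i_L⟩` is the uniform superposition of `|a, a + i, a + 2i⟩` over `a ∈ ℤ/3`, and
the first two qutrits `(a, a + i)` determine both `i` and the third qutrit `a + 2i`. The permutation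
`(a, b) ↦ (b - a, 2a - b)` of the first two qutrits is therefore a unitary sending
`|a, a + i, a + 2i⟩` to `|i⟩ ⊗ |a + 2i, a + 2i⟩`; summing over `a` gives `|i⟩ ⊗ |χ⟩`.
-/

open Matrix Kronecker BigOperators MeasureTheory

/-- Von Neumann entropy of a matrix (via eigenvalues of a Hermitian matrix). -/
noncomputable def vNEntropy {n : Type*} [Fintype n] [DecidableEq n] (ρ : Matrix n n ℂ) : ℝ :=
  if h : ρ.IsHermitian then -∑ i, h.eigenvalues i * Real.log (h.eigenvalues i) else 0

/-- Partial trace over the second (right) tensor factor. -/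
noncomputable def ptraceR {a b : Type*} [Fintype b] (ρ : Matrix (a × b) (a × b) ℂ) :
    Matrix a a ℂ := Matrix.of fun i j => ∑ k, ρ (i, k) (j, k)

/-- Partial trace over the first (left) tensor factor. -/
noncomputable def ptraceL {a b : Type*} [Fintype a] (ρ : Matrix (a × b) (a × b) ℂ) :
    Matrix b b ℂ := Matrix.of fun i j => ∑ k, ρ (k, i) (k, j)

/-- Outer product |v⟩⟨w|. -/
def outer {n : Type*} (v w : n → ℂ) : Matrix n n ℂ := Matrix.of fun i j => v i * star (w j)
/-- Basis vector `|abc⟩` of three qutrits. -/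
noncomputable def ket3 (a b c : Fin 3) : (Fin 3 × Fin 3) × Fin 3 → ℂ :=
  fun p => if p.1.1 = a ∧ p.1.2 = b ∧ p.2 = c then 1 else 0

noncomputable def L0 : (Fin 3 × Fin 3) × Fin 3 → ℂ :=
  (Real.sqrt 3 : ℂ)⁻¹ • (ket3 0 0 0 + ket3 1 1 1 + ket3 2 2 2)

noncomputable def L1 : (Fin 3 × Fin 3) × Fin 3 → ℂ :=
  (Real.sqrt 3 : ℂ)⁻¹ • (ket3 0 1 2 + ket3 2 0 1 + ket3 1 2 0)

noncomputable def L2 : (Fin 3 × Fin 3) × Fin 3 → ℂ :=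
  (Real.sqrt 3 : ℂ)⁻¹ • (ket3 0 2 1 + ket3 1 0 2 + ket3 2 1 0)

noncomputable def codeState : Fin 3 → ((Fin 3 × Fin 3) × Fin 3 → ℂ) := ![L0, L1, L2]

/-- Inner product `⟨v, w⟩`. -/
noncomputable def ip {n : Type*} [Fintype n] (v w : n → ℂ) : ℂ := ∑ p, star (v p) * w p

/-- The maximally entangled pair `|χ⟩ = (|00⟩+|11⟩+|22⟩)/√3`. -/
noncomputable def chi : Fin 3 × Fin 3 → ℂ :=
  fun q => (Real.sqrt 3 : ℂ)⁻¹ * (if q.1 = q.2 then 1 else 0)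

namespace Matrix

variable {m n R : Type*} [DecidableEq n]

theorem permMatrix_mem_unitaryGroup [Fintype n] [CommRing R] [StarRing R] (σ : Equiv.Perm n) :
    σ.permMatrix R ∈ unitaryGroup n R := by
  rw [mem_unitaryGroup_iff, star_eq_conjTranspose, conjTranspose_permMatrix, ← permMatrix_mul,
    inv_mul_cancel, permMatrix_one]

theorem permMatrix_kronecker_one [MulZeroOneClass R] [DecidableEq m] (σ : Equiv.Perm n) :
    σ.permMatrix R ⊗ₖ (1 : Matrix m m R) =
      Equiv.Perm.permMatrix R (σ.prodCongr (Equiv.refl m)) := by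
  rw [Equiv.Perm.permMatrix, Equiv.Perm.permMatrix, PEquiv.toMatrix_toPEquiv_eq,
    PEquiv.toMatrix_toPEquiv_eq, kroneckerMap_submatrix_left, one_kronecker_one]
  rfl

theorem permMatrix_kronecker_one_mulVec [CommRing R] [Fintype n] [Fintype m] [DecidableEq m]
    (σ : Equiv.Perm n) (v : n × m → R) :
    (σ.permMatrix R ⊗ₖ (1 : Matrix m m R)) *ᵥ v = fun p => v (σ p.1, p.2) := by
  rw [permMatrix_kronecker_one, permMatrix_mulVec]
  rfl

end Matrix

theorem codeState_apply (i : Fin 3) (p : Fin 3 × Fin 3) (c : Fin 3) :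
    codeState i (p, c) =
      (Real.sqrt 3 : ℂ)⁻¹ * if p.2 = p.1 + i ∧ c = p.1 + 2 * i then 1 else 0 := by
  obtain ⟨a, b⟩ := p
  fin_cases i <;> fin_cases a <;> fin_cases b <;> fin_cases c <;>
    simp [codeState, L0, L1, L2, ket3]

-- `σ.permMatrix` sends `|p⟩` to `|σ⁻¹ p⟩`, so this is the inverse of `(a, b) ↦ (b - a, 2a - b)`.
def recoveryPerm : Equiv.Perm (Fin 3 × Fin 3) where
  toFun p := (p.1 + p.2, 2 * p.1 + p.2)
  invFun q := (q.2 - q.1, 2 * q.1 - q.2)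
  left_inv := by decide
  right_inv := by decide

theorem codeState_support_recoveryPerm_iff (i x y c : Fin 3) :
    (recoveryPerm (x, y)).2 = (recoveryPerm (x, y)).1 + i ∧
        c = (recoveryPerm (x, y)).1 + 2 * i ↔ x = i ∧ y = c := by
  revert i x y c
  decide

/-- There is a unitary `U₁₂` on the first two qutrits recovering the logical qutrit:
`(U₁₂ ⊗ I)|i_L⟩ = |i⟩ ⊗ |χ⟩₂₃`. -/
theorem exists_recovery_unitary :
    ∃ U : Matrix (Fin 3 × Fin 3) (Fin 3 × Fin 3) ℂ,
      U ∈ Matrix.unitaryGroup (Fin 3 × Fin 3) ℂ ∧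
      ∀ i : Fin 3,
        (U ⊗ₖ (1 : Matrix (Fin 3) (Fin 3) ℂ)).mulVec (codeState i) =
          fun p => (if p.1.1 = i then 1 else 0) * chi (p.1.2, p.2) := by
  refine ⟨recoveryPerm.permMatrix ℂ, permMatrix_mem_unitaryGroup _, fun i => ?_⟩
  ext ⟨⟨x, y⟩, c⟩
  simp only [permMatrix_kronecker_one_mulVec, codeState_apply, codeState_support_recoveryPerm_iff,
    chi]
  by_cases hx : x = i <;> simp [hx]
end

section
/- For the three-qutrit code, the reduced density matrix of any single qutrit of any code state (and indeed of any normalized state in the code subspace) is the maximally mixed state I/3. -/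
open Matrix Kronecker BigOperators MeasureTheory

set_option maxHeartbeats 2000000 in
/-- For any normalized state in the three-qutrit code subspace, the reduced density matrix
of each single qutrit is maximally mixed, `I/3`. -/

theorem code_single_qutrit_maximally_mixed
    (ψ : (Fin 3 × Fin 3) × Fin 3 → ℂ)
    (hmem : ψ ∈ Submodule.span ℂ {codeState 0, codeState 1, codeState 2})
    (hnorm : ∑ p, star (ψ p) * ψ p = 1) :
    (Matrix.of fun a b : Fin 3 =>
        ∑ c : Fin 3, ∑ d : Fin 3, outer ψ ψ ((a, c), d) ((b, c), d))
      = (3 : ℂ)⁻¹ • (1 : Matrix (Fin 3) (Fin 3) ℂ) ∧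
    (Matrix.of fun a b : Fin 3 =>
        ∑ c : Fin 3, ∑ d : Fin 3, outer ψ ψ ((c, a), d) ((c, b), d))
      = (3 : ℂ)⁻¹ • (1 : Matrix (Fin 3) (Fin 3) ℂ) ∧
    (Matrix.of fun a b : Fin 3 =>
        ∑ c : Fin 3, ∑ d : Fin 3, outer ψ ψ ((c, d), a) ((c, d), b))
      = (3 : ℂ)⁻¹ • (1 : Matrix (Fin 3) (Fin 3) ℂ) := by

  rw [show ({codeState 0, codeState 1, codeState 2} : Set _) =
      insert (codeState 0) {codeState 1, codeState 2} from rfl,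
    Submodule.mem_span_insert] at hmem
  obtain ⟨x, ψ', hψ', rfl⟩ := hmem
  rw [show ({codeState 1, codeState 2} : Set _) = insert (codeState 1) {codeState 2} from rfl,
    Submodule.mem_span_insert] at hψ'
  obtain ⟨y, ψ'', hψ'', rfl⟩ := hψ'
  rw [Submodule.mem_span_singleton] at hψ''
  obtain ⟨z, rfl⟩ := hψ''
  simp only [codeState, Matrix.cons_val_zero, Matrix.cons_val_one, Matrix.head_cons,
    Matrix.cons_val_two, Matrix.tail_cons, L0, L1, L2, ket3, Pi.add_apply, Pi.smul_apply,
    smul_eq_mul, Fintype.sum_prod_type, Fin.sum_univ_three] at hnorm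
  norm_num [Fin.ext_iff, star_mul', star_add] at hnorm
  refine ⟨?_, ?_, ?_⟩ <;>
    ext a b <;> fin_cases a <;> fin_cases b <;>
    · simp only [codeState, Matrix.cons_val_zero, Matrix.cons_val_one, Matrix.head_cons,
        Matrix.cons_val_two, Matrix.tail_cons, L0, L1, L2, ket3, outer, Matrix.of_apply,
        Pi.add_apply, Pi.smul_apply, smul_eq_mul, Fin.sum_univ_three,
        Matrix.smul_apply, Matrix.one_apply]
      norm_num [Fin.ext_iff, star_mul', star_add]
      try linear_combination (1/3 : ℂ) * hnorm
end

section
/- Subregion-isometry implies Ryu–Takayanagi: let |ψ⟩ = (C⊗C̄)(|Ψ⟩_{BB̄} ⊗ |Φ⟩_{W W̄}), where C : H_W ⊗ H_B → H_A and C̄ : H_{W̄} ⊗ H_{B̄} → H_{Ā} are isometries, |Ψ⟩_{BB̄} is a tensor product of n maximally entangled pairs each of local dimension D, and |Φ⟩ is an arbitrary normalized state. Then the reduced density matrix satisfies ρ_A = C (τ_B ⊗ ρ_W) C† where τ_B is maximally mixed on H_B and ρ_W = tr_{W̄}|Φ⟩⟨Φ|, and hence S(ρ_A) = n log D + S(ρ_W).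 -/
open Matrix Kronecker BigOperators MeasureTheory

/-! The isometry `C̄` drops out when `Ā` is traced out, because `C̄ᴴ C̄ = 1` and the partial trace
is cyclic on the traced factor; tracing `B̄` out of the maximally entangled pairs leaves `τ_B`, so
`ρ_A = C (ρ_W ⊗ τ_B) Cᴴ`. The entropy is unchanged by conjugation with an isometry, since it only
adds zero eigenvalues, and `ρ_W ⊗ τ_B` has the eigenvalues `λ_w / Dⁿ`, each `Dⁿ` times, whence
`S(ρ_A) = S(ρ_W) + n log D`. -/

namespace Matrix

lemma IsHermitian.kronecker {m n : Type*} {A : Matrix m m ℂ} {B : Matrix n n ℂ}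
    (hA : A.IsHermitian) (hB : B.IsHermitian) : (A ⊗ₖ B).IsHermitian := by
  rw [IsHermitian, conjTranspose_kronecker, hA.eq, hB.eq]

lemma isHermitian_diagonal_ofReal {m : Type*} [DecidableEq m] (d : m → ℝ) :
    (diagonal fun i => (d i : ℂ)).IsHermitian :=
  isHermitian_diagonal_of_self_adjoint _ (by ext; simp)

open Polynomial

variable {m k : Type*} [Fintype m] [DecidableEq m] [Fintype k] [DecidableEq k]

lemma IsHermitian.vNEntropy_eq_sum_negMulLog {ρ : Matrix m m ℂ} (hρ : ρ.IsHermitian) :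
    vNEntropy ρ = ∑ i, Real.negMulLog (hρ.eigenvalues i) := by
  simp [vNEntropy, dif_pos hρ, Real.negMulLog]

lemma IsHermitian.vNEntropy_eq_sum_roots_charpoly {ρ : Matrix m m ℂ} (hρ : ρ.IsHermitian) :
    vNEntropy ρ = (ρ.charpoly.roots.map fun z => Real.negMulLog z.re).sum := by
  simp [hρ.vNEntropy_eq_sum_negMulLog, hρ.roots_charpoly_eq_eigenvalues]

/-- `E ρ Eᴴ` and `Eᴴ E ρ = ρ` have the same characteristic polynomial up to a power of `X`, and the
extra zero roots do not contribute since `negMulLog 0 = 0`. -/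
lemma vNEntropy_conj_isometry {ρ : Matrix k k ℂ} (hρ : ρ.IsHermitian) {E : Matrix m k ℂ}
    (hE : Eᴴ * E = 1) : vNEntropy (E * ρ * Eᴴ) = vNEntropy ρ := by
  have hcomm := charpoly_mul_comm' (E * ρ) Eᴴ
  rw [← Matrix.mul_assoc, hE, Matrix.one_mul] at hcomm
  have hroots := congrArg (fun p => (p.roots.map fun z => Real.negMulLog z.re).sum) hcomm
  simp only [roots_mul (mul_ne_zero (pow_ne_zero _ X_ne_zero) (charpoly_monic _).ne_zero),
    roots_X_pow, Multiset.map_add, Multiset.sum_add, Multiset.map_nsmul, Multiset.map_singleton,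
    Complex.zero_re, Real.negMulLog_zero, Multiset.sum_nsmul, Multiset.sum_singleton, smul_zero,
    zero_add] at hroots
  rwa [(isHermitian_mul_mul_conjTranspose E hρ).vNEntropy_eq_sum_roots_charpoly,
    hρ.vNEntropy_eq_sum_roots_charpoly]

lemma vNEntropy_diagonal (d : m → ℝ) :
    vNEntropy (diagonal fun i => (d i : ℂ)) = ∑ i, Real.negMulLog (d i) := by
  rw [(isHermitian_diagonal_ofReal d).vNEntropy_eq_sum_roots_charpoly, charpoly_diagonal,
    roots_prod _ _ (by simp [Finset.prod_ne_zero_iff, X_sub_C_ne_zero])]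
  simp

variable {F : Type*} [Fintype F] [DecidableEq F]

lemma IsHermitian.kronecker_eq_conj_diagonal {ρ : Matrix m m ℂ} (hρ : ρ.IsHermitian) (c : ℝ) :
    ρ ⊗ₖ ((c : ℂ) • (1 : Matrix F F ℂ)) =
      ((hρ.eigenvectorUnitary : Matrix m m ℂ) ⊗ₖ (1 : Matrix F F ℂ)) *
        diagonal (fun p : m × F => ((hρ.eigenvalues p.1 * c : ℝ) : ℂ)) *
        ((hρ.eigenvectorUnitary : Matrix m m ℂ) ⊗ₖ (1 : Matrix F F ℂ))ᴴ := by
  have hΛ : diagonal (fun p : m × F => ((hρ.eigenvalues p.1 * c : ℝ) : ℂ)) =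
      diagonal (RCLike.ofReal ∘ hρ.eigenvalues) ⊗ₖ diagonal (fun _ : F => (c : ℂ)) := by
    rw [diagonal_kronecker_diagonal]
    simp
  rw [hΛ, conjTranspose_kronecker, conjTranspose_one, ← mul_kronecker_mul, ← mul_kronecker_mul,
    Matrix.one_mul, Matrix.mul_one, smul_one_eq_diagonal]
  congr 1
  conv_lhs => rw [hρ.spectral_theorem]
  simp [Unitary.conjStarAlgAut_apply, star_eq_conjTranspose]

lemma vNEntropy_kronecker_maximallyMixed [Nonempty F] {ρ : Matrix m m ℂ} (hρ : ρ.IsHermitian)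
    (htr : ρ.trace = 1) :
    vNEntropy (ρ ⊗ₖ ((Fintype.card F : ℂ)⁻¹ • (1 : Matrix F F ℂ))) =
      vNEntropy ρ + Real.log (Fintype.card F) := by
  set U := (hρ.eigenvectorUnitary : Matrix m m ℂ)
  have hU : Uᴴ * U = 1 := by
    rw [← star_eq_conjTranspose]; exact Unitary.coe_star_mul_self hρ.eigenvectorUnitary
  have hUF : (U ⊗ₖ (1 : Matrix F F ℂ))ᴴ * (U ⊗ₖ (1 : Matrix F F ℂ)) = 1 := by
    rw [conjTranspose_kronecker, conjTranspose_one, ← mul_kronecker_mul, hU, Matrix.one_mul,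
      one_kronecker_one]
  have hsum : ∑ i, hρ.eigenvalues i = 1 := by
    simpa using congrArg RCLike.re (hρ.trace_eq_sum_eigenvalues.symm.trans htr)
  rw [show (Fintype.card F : ℂ)⁻¹ = (((Fintype.card F : ℝ)⁻¹ : ℝ) : ℂ) by push_cast; rfl,
    hρ.kronecker_eq_conj_diagonal, vNEntropy_conj_isometry (isHermitian_diagonal_ofReal _) hUF,
    vNEntropy_diagonal, hρ.vNEntropy_eq_sum_negMulLog, Fintype.sum_prod_type]
  have hN : (Fintype.card F : ℝ) ≠ 0 := by positivity
  have hterm : ∀ x : ℝ, (Fintype.card F : ℝ) * ((Fintype.card F : ℝ)⁻¹ * x.negMulLog +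
      x * (Fintype.card F : ℝ)⁻¹.negMulLog) = x.negMulLog + x * Real.log (Fintype.card F) := by
    intro x
    simp only [Real.negMulLog, Real.log_inv]
    field_simp
  simp only [Real.negMulLog_mul, Finset.sum_const, Finset.card_univ, nsmul_eq_mul, hterm,
    Finset.sum_add_distrib, ← Finset.sum_mul, hsum, one_mul]

end Matrix

section PartialTrace

variable {a b k l : Type*} [Fintype k] [Fintype l]

lemma ptraceR_kronecker_one_conj [Fintype b] [DecidableEq b] (M N : Matrix a k ℂ)
    (Y : Matrix (k × b) (k × b) ℂ) :
    ptraceR ((M ⊗ₖ (1 : Matrix b b ℂ)) * Y * (N ⊗ₖ (1 : Matrix b b ℂ))ᴴ) = M * ptraceR Y * Nᴴ := by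
  ext i i'
  simp only [ptraceR, mul_apply, kroneckerMap_apply, one_apply, mul_ite, mul_one, mul_zero,
    ite_mul, zero_mul, Fintype.sum_prod_type, Finset.sum_ite_eq, Finset.mem_univ, ↓reduceIte,
    conjTranspose_apply, RCLike.star_def, apply_ite (starRingEnd ℂ), map_zero, Finset.sum_mul,
    of_apply, Finset.mul_sum]
  rw [Finset.sum_comm]
  exact Finset.sum_congr rfl fun _ _ => Finset.sum_comm

lemma ptraceR_one_kronecker_isometry_conj [Fintype a] [Fintype b] [DecidableEq a] [DecidableEq l]
    {B : Matrix b l ℂ} (hB : Bᴴ * B = 1) (X : Matrix (a × l) (a × l) ℂ) :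
    ptraceR (((1 : Matrix a a ℂ) ⊗ₖ B) * X * ((1 : Matrix a a ℂ) ⊗ₖ B)ᴴ) = ptraceR X := by
  ext i i'
  have hblock : ptraceR (((1 : Matrix a a ℂ) ⊗ₖ B) * X * ((1 : Matrix a a ℂ) ⊗ₖ B)ᴴ) i i' =
      (B * X.submatrix (Prod.mk i) (Prod.mk i') * Bᴴ).trace := by
    simp [ptraceR, trace, mul_apply, kroneckerMap_apply, one_apply, Fintype.sum_prod_type,
      Finset.sum_mul, apply_ite (starRingEnd ℂ), mul_ite, ite_mul]
  rw [hblock, trace_mul_cycle, hB, Matrix.one_mul]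
  rfl

lemma ptraceR_kronecker_isometry_conj [Fintype b] [DecidableEq b]
    [DecidableEq k] [DecidableEq l] (M : Matrix a k ℂ) {B : Matrix b l ℂ} (hB : Bᴴ * B = 1)
    (X : Matrix (k × l) (k × l) ℂ) :
    ptraceR ((M ⊗ₖ B) * X * (M ⊗ₖ B)ᴴ) = M * ptraceR X * Mᴴ := by
  set P := M ⊗ₖ (1 : Matrix b b ℂ)
  set Q := (1 : Matrix k k ℂ) ⊗ₖ B
  have hsplit : M ⊗ₖ B = P * Q := by rw [← mul_kronecker_mul, Matrix.mul_one, Matrix.one_mul]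
  rw [hsplit, conjTranspose_mul,
    show P * Q * X * (Qᴴ * Pᴴ) = P * (Q * X * Qᴴ) * Pᴴ by simp only [Matrix.mul_assoc],
    ptraceR_kronecker_one_conj, ptraceR_one_kronecker_isometry_conj hB]

lemma outer_mulVec (M : Matrix a k ℂ) (v w : k → ℂ) :
    outer (M *ᵥ v) (M *ᵥ w) = M * outer v w * Mᴴ := by
  ext i j
  simp only [outer, of_apply, mulVec, dotProduct, mul_apply, conjTranspose_apply, star_sum,
    star_mul', Finset.sum_mul, Finset.mul_sum]
  refine Finset.sum_congr rfl fun p _ => Finset.sum_congr rfl fun q _ => ?_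
  ring

lemma isHermitian_ptraceR_outer_self [Fintype b] (v : a × b → ℂ) :
    (ptraceR (outer v v)).IsHermitian := by
  ext i j
  simp [ptraceR, outer, mul_comm]

lemma trace_ptraceR_outer_self [Fintype a] [Fintype b] (v : a × b → ℂ) :
    (ptraceR (outer v v)).trace = ∑ p, star (v p) * v p := by
  simp [trace, ptraceR, outer, Fintype.sum_prod_type, mul_comm]

lemma ptraceR_outer_kronecker_maxEntangled [Fintype b] [DecidableEq l] (s : ℂ)
    (v : a × b → ℂ) {w : (a × l) × (b × l) → ℂ}
    (hw : ∀ q, w q = s * (if q.1.2 = q.2.2 then 1 else 0) * v (q.1.1, q.2.1)) :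
    ptraceR (outer w w) = ptraceR (outer v v) ⊗ₖ ((s * star s) • (1 : Matrix l l ℂ)) := by
  ext ⟨i, m⟩ ⟨i', m'⟩
  simp only [ptraceR, outer, hw, mul_ite, mul_one, mul_zero, ite_mul, zero_mul, RCLike.star_def,
    apply_ite (starRingEnd ℂ), map_mul, map_zero, of_apply, Fintype.sum_prod_type,
    Finset.sum_ite_eq, Finset.mem_univ, ↓reduceIte, Finset.sum_ite_irrel, Finset.sum_const_zero,
    kroneckerMap_apply, Matrix.smul_apply, one_apply, smul_eq_mul]
  split_ifs
  · rw [Finset.sum_mul]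
    exact Finset.sum_congr rfl fun _ _ => by ring
  · rfl

end PartialTrace

/-- Subregion isometry implies the Ryu–Takayanagi formula:
for `|ψ⟩ = (C ⊗ C̄)(|Ψ⟩_{BB̄} ⊗ |Φ⟩_{WW̄})` with `C, C̄` isometries and `|Ψ⟩` a
product of `n` maximally entangled pairs of local dimension `D`,
`ρ_A = C (ρ_W ⊗ I/Dⁿ) C†` and `S(ρ_A) = n log D + S(ρ_W)`. -/
theorem subregion_isometry_RT
    {W Wb A Ab : Type*} [Fintype W] [DecidableEq W] [Fintype Wb] [DecidableEq Wb]
    [Fintype A] [DecidableEq A] [Fintype Ab] [DecidableEq Ab]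
    (n D : ℕ) (hD : 0 < D)
    (C : Matrix A (W × (Fin n → Fin D)) ℂ) (hC : Cᴴ * C = 1)
    (Cb : Matrix Ab (Wb × (Fin n → Fin D)) ℂ) (hCb : Cbᴴ * Cb = 1)
    (Φ : W × Wb → ℂ) (hΦ : ∑ p, star (Φ p) * Φ p = 1)
    (ψ : A × Ab → ℂ)
    (hψ : ψ = (C ⊗ₖ Cb).mulVec (fun q =>
      ((Real.sqrt ((D : ℝ) ^ n) : ℂ))⁻¹ * (if q.1.2 = q.2.2 then 1 else 0) * Φ (q.1.1, q.2.1)))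
    (ρA : Matrix A A ℂ) (hρA : ρA = ptraceR (outer ψ ψ))
    (ρW : Matrix W W ℂ) (hρW : ρW = ptraceR (outer Φ Φ)) :
    ρA = C * (ρW ⊗ₖ (((D : ℂ) ^ n)⁻¹ •
        (1 : Matrix (Fin n → Fin D) (Fin n → Fin D) ℂ))) * Cᴴ ∧
    vNEntropy ρA = n * Real.log D + vNEntropy ρW := by
  have hρW_herm : ρW.IsHermitian := hρW ▸ isHermitian_ptraceR_outer_self Φ
  have hρW_tr : ρW.trace = 1 := by rw [hρW, trace_ptraceR_outer_self, hΦ]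
  have hnorm : ((Real.sqrt ((D : ℝ) ^ n) : ℂ))⁻¹ * star ((Real.sqrt ((D : ℝ) ^ n) : ℂ))⁻¹ =
      ((D : ℂ) ^ n)⁻¹ := by
    rw [star_inv₀, Complex.star_def, Complex.conj_ofReal, ← mul_inv, ← Complex.ofReal_mul,
      Real.mul_self_sqrt (by positivity)]
    push_cast; rfl
  have hρA_eq : ρA = C * (ρW ⊗ₖ (((D : ℂ) ^ n)⁻¹ •
      (1 : Matrix (Fin n → Fin D) (Fin n → Fin D) ℂ))) * Cᴴ := by
    rw [hρA, hψ, outer_mulVec, ptraceR_kronecker_isometry_conj C hCb,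
      ptraceR_outer_kronecker_maxEntangled _ Φ (fun _ => rfl), hnorm, hρW]
  refine ⟨hρA_eq, ?_⟩
  have hcard : Fintype.card (Fin n → Fin D) = D ^ n := by simp
  have : Nonempty (Fin n → Fin D) := ⟨fun _ => ⟨0, hD⟩⟩
  have hherm : (ρW ⊗ₖ (((D : ℂ) ^ n)⁻¹ •
      (1 : Matrix (Fin n → Fin D) (Fin n → Fin D) ℂ))).IsHermitian :=
    hρW_herm.kronecker (isHermitian_one.smul ((IsSelfAdjoint.natCast D).pow n).inv₀)
  rw [hρA_eq, vNEntropy_conj_isometry hherm hC, ← Nat.cast_pow, ← hcard,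
    vNEntropy_kronecker_maximallyMixed hρW_herm hρW_tr, hcard, Nat.cast_pow, Real.log_pow]
  ring
end

section
/- Subregion-isometry implies the error correction property: with |ψ⟩ = (C⊗C̄)(|Ψ⟩_{BB̄} ⊗ |Φ⟩_{W W̄}) as above (C, C̄ isometries, |Ψ⟩ maximally entangled across B and B̄), for any operator O_W on H_W, the operator O_A := C(O_W ⊗ I_B)C† satisfies tr(ρ_A O_A) = tr(ρ_W O_W), where ρ_A = tr_{Ā}|ψ⟩⟨ψ| and ρ_W = tr_{W̄}|Φ⟩⟨Φ|. -/
open Matrix Kronecker BigOperators MeasureTheory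

lemma kron_conjT {a b c d : Type*} (X : Matrix a b ℂ) (Y : Matrix c d ℂ) :
    (X ⊗ₖ Y)ᴴ = Xᴴ ⊗ₖ Yᴴ := by
  ext ⟨i, j⟩ ⟨k, l⟩
  simp [conjTranspose_apply, kroneckerMap_apply, star_mul', mul_comm]

lemma tr_ptraceR_mul {a b : Type*} [Fintype a] [Fintype b] [DecidableEq b]
    (ρ : Matrix (a × b) (a × b) ℂ) (M : Matrix a a ℂ) :
    (ptraceR ρ * M).trace = (ρ * (M ⊗ₖ (1 : Matrix b b ℂ))).trace := by
  simp only [Matrix.trace, Matrix.diag, Matrix.mul_apply, ptraceR, Matrix.of_apply,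
    kroneckerMap_apply, Fintype.sum_prod_type, Matrix.one_apply, mul_ite, mul_one, mul_zero,
    Finset.sum_ite_eq', Finset.mem_univ, if_true, Finset.sum_mul]
  refine Finset.sum_congr rfl fun i _ => ?_
  show (∑ k, ∑ c, _ * _ : ℂ) = ∑ c, ∑ k, _
  rw [Finset.sum_comm]

lemma outer_mulVec_s12 {m k : Type*} [Fintype k] (K : Matrix m k ℂ) (v w : k → ℂ) :
    outer (K.mulVec v) (K.mulVec w) = K * outer v w * Kᴴ := by
  ext i j
  simp only [outer, Matrix.of_apply, mulVec, dotProduct, Matrix.mul_apply,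
    conjTranspose_apply, star_sum, star_mul', Finset.sum_mul, Finset.mul_sum]
  exact Finset.sum_congr rfl fun p _ => Finset.sum_congr rfl fun q _ => by ring

lemma myTraceConj {p q : Type*} [Fintype p] [Fintype q] (K : Matrix p q ℂ)
    (σ : Matrix q q ℂ) (X : Matrix p p ℂ) :
    (K * σ * Kᴴ * X).trace = (σ * (Kᴴ * X * K)).trace := by
  rw [Matrix.mul_assoc (K * σ) Kᴴ X, Matrix.trace_mul_comm, ← Matrix.mul_assoc,
    Matrix.trace_mul_comm]

lemma ptraceR_outer_delta {W Wb B : Type*} [Fintype W] [Fintype Wb] [Fintype B] [DecidableEq B]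
    (c : ℂ) (Φ : W × Wb → ℂ) :
    ptraceR (outer (fun q : (W × B) × (Wb × B) =>
        c * (if q.1.2 = q.2.2 then 1 else 0) * Φ (q.1.1, q.2.1))
      (fun q : (W × B) × (Wb × B) =>
        c * (if q.1.2 = q.2.2 then 1 else 0) * Φ (q.1.1, q.2.1)))
      = (c * star c) • ((ptraceR (outer Φ Φ)) ⊗ₖ (1 : Matrix B B ℂ)) := by
  ext ⟨w, b⟩ ⟨w', b'⟩
  simp only [ptraceR, outer, Matrix.of_apply, Matrix.smul_apply, kroneckerMap_apply,
    Fintype.sum_prod_type, Matrix.one_apply, star_mul', mul_ite, mul_one, mul_zero,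
    ite_mul, zero_mul, apply_ite (star : ℂ → ℂ), star_one, star_zero, one_mul, smul_eq_mul]
  simp only [Finset.sum_ite_eq, Finset.mem_univ, if_true]
  by_cases h : b = b'
  · simp only [h, if_true, Finset.mul_sum]
    exact Finset.sum_congr rfl fun wb _ => by ring
  · simp [h]

/-- Subregion isometry implies the error correction property: with
`|ψ⟩ = (C ⊗ C̄)(|Ψ⟩_{BB̄} ⊗ |Φ⟩_{WW̄})` as in the RT setup, the operator
`O_A = C (O_W ⊗ I_B) C†` satisfies `tr(ρ_A O_A) = tr(ρ_W O_W)`. -/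
theorem subregion_isometry_error_correction
    {W Wb A Ab : Type*} [Fintype W] [DecidableEq W] [Fintype Wb] [DecidableEq Wb]
    [Fintype A] [DecidableEq A] [Fintype Ab] [DecidableEq Ab]
    (n D : ℕ) (hD : 0 < D)
    (C : Matrix A (W × (Fin n → Fin D)) ℂ) (hC : Cᴴ * C = 1)
    (Cb : Matrix Ab (Wb × (Fin n → Fin D)) ℂ) (hCb : Cbᴴ * Cb = 1)
    (Φ : W × Wb → ℂ) (hΦ : ∑ p, star (Φ p) * Φ p = 1)
    (ψ : A × Ab → ℂ)
    (hψ : ψ = (C ⊗ₖ Cb).mulVec (fun q =>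
      ((Real.sqrt ((D : ℝ) ^ n) : ℂ))⁻¹ * (if q.1.2 = q.2.2 then 1 else 0) * Φ (q.1.1, q.2.1)))
    (OW : Matrix W W ℂ) :
    ((ptraceR (outer ψ ψ)) *
        (C * (OW ⊗ₖ (1 : Matrix (Fin n → Fin D) (Fin n → Fin D) ℂ)) * Cᴴ)).trace
      = ((ptraceR (outer Φ Φ)) * OW).trace := by
  classical
  set s : ℂ := ((Real.sqrt ((D : ℝ) ^ n) : ℝ) : ℂ) with hs
  set N : Matrix (W × (Fin n → Fin D)) (W × (Fin n → Fin D)) ℂ :=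
    OW ⊗ₖ (1 : Matrix (Fin n → Fin D) (Fin n → Fin D) ℂ) with hN
  set K := C ⊗ₖ Cb with hK
  set v : (W × (Fin n → Fin D)) × (Wb × (Fin n → Fin D)) → ℂ :=
    fun q => s⁻¹ * (if q.1.2 = q.2.2 then 1 else 0) * Φ (q.1.1, q.2.1) with hv
  have hψ' : ψ = K.mulVec v := hψ
  rw [tr_ptraceR_mul, hψ', outer_mulVec_s12, myTraceConj]
  have hKH : Kᴴ = Cᴴ ⊗ₖ Cbᴴ := kron_conjT C Cb
  have key : Kᴴ * ((C * N * Cᴴ) ⊗ₖ (1 : Matrix Ab Ab ℂ)) * K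
      = N ⊗ₖ (1 : Matrix (Wb × (Fin n → Fin D)) (Wb × (Fin n → Fin D)) ℂ) := by
    have e1 : Cᴴ * (C * N * Cᴴ) * C = N := by
      calc Cᴴ * (C * N * Cᴴ) * C = (Cᴴ * C) * N * (Cᴴ * C) := by
            simp only [Matrix.mul_assoc]
        _ = N := by rw [hC]; simp
    have e2 : Cbᴴ * (1 : Matrix Ab Ab ℂ) * Cb = 1 := by rw [Matrix.mul_one, hCb]
    rw [hKH, hK, ← Matrix.mul_kronecker_mul, ← Matrix.mul_kronecker_mul, e1, e2]
  rw [key, ← tr_ptraceR_mul]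
  have hptr : ptraceR (outer v v)
      = (s⁻¹ * star s⁻¹) • ((ptraceR (outer Φ Φ)) ⊗ₖ
          (1 : Matrix (Fin n → Fin D) (Fin n → Fin D) ℂ)) :=
    ptraceR_outer_delta s⁻¹ Φ
  rw [hptr, hN, Matrix.smul_mul, Matrix.trace_smul, ← Matrix.mul_kronecker_mul,
    Matrix.one_mul, Matrix.trace_kronecker, Matrix.trace_one]
  have hcard : (Fintype.card (Fin n → Fin D) : ℂ) = ((D : ℂ)) ^ n := by
    simp [Fintype.card_fun]
  have hsne : s ≠ 0 := by
    simp only [hs, ne_eq, Complex.ofReal_eq_zero]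
    positivity
  have hss : s * s = ((D : ℂ)) ^ n := by
    rw [hs, ← Complex.ofReal_mul, Real.mul_self_sqrt (by positivity)]
    push_cast
    ring
  have hstar : star s⁻¹ = s⁻¹ := by simp [hs]
  rw [hstar, hcard]
  have h1 : s⁻¹ * s⁻¹ * ((D : ℂ) ^ n) = 1 := by
    rw [← hss]; field_simp
  rw [smul_eq_mul]
  calc s⁻¹ * s⁻¹ * ((ptraceR (outer Φ Φ) * OW).trace * (D : ℂ) ^ n)
      = (s⁻¹ * s⁻¹ * ((D : ℂ) ^ n)) * (ptraceR (outer Φ Φ) * OW).trace := by ring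
    _ = (ptraceR (outer Φ Φ) * OW).trace := by rw [h1, one_mul]
end
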